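/- Corollary 3 (eigenvalues of the two-qubit leakage-damping transition matrix): let ε1, ε2 ≥ 0 be reals and let M be the 3×3 real matrix M = [[1 − ε1/4 − ε2/4, ε1/2, ε2/2], [ε1/4, 1 − ε1/2, 0], [ε2/4, 0, 1 − ε2/2]]. Then for every real λ, det(M − λ·I) = (1 − λ)·(λ_+ − λ)·(λ_− − λ), where λ_± = 1 − (3/8)(ε1 + ε2) ± (1/8)·√(9ε1² − 14ε1ε2 + 9ε2²); in particular 9ε1² − 14ε1ε2 + 9ε2² ≥ 0, and the eigenvalues of M are 1, λ_+, λ_−. -/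
import Mathlib


open Matrix

noncomputable section

/-- The condensed-operator transition matrix of the two-qubit leakage damping
channel (restricted to the subspaces cc, cl, lc). -/
def Mtwo (ε1 ε2 : ℝ) : Matrix (Fin 3) (Fin 3) ℝ :=
  !![1 - ε1 / 4 - ε2 / 4, ε1 / 2, ε2 / 2;
     ε1 / 4, 1 - ε1 / 2, 0;
     ε2 / 4, 0, 1 - ε2 / 2]

/-- λ₊ = 1 − (3/8)(ε1 + ε2) + (1/8)√(9ε1² − 14ε1ε2 + 9ε2²). -/
def lamP (ε1 ε2 : ℝ) : ℝ :=
  1 - 3 / 8 * (ε1 + ε2) + 1 / 8 * Real.sqrt (9 * ε1 ^ 2 - 14 * ε1 * ε2 + 9 * ε2 ^ 2)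

/-- λ₋ = 1 − (3/8)(ε1 + ε2) − (1/8)√(9ε1² − 14ε1ε2 + 9ε2²). -/
def lamM (ε1 ε2 : ℝ) : ℝ :=
  1 - 3 / 8 * (ε1 + ε2) - 1 / 8 * Real.sqrt (9 * ε1 ^ 2 - 14 * ε1 * ε2 + 9 * ε2 ^ 2)

/-- Corollary 3 (eigenvalues of the two-qubit leakage-damping transition matrix):
det(M − λI) = (1 − λ)(λ₊ − λ)(λ₋ − λ); in particular 9ε1² − 14ε1ε2 + 9ε2² ≥ 0 and
the eigenvalues of M are 1, λ₊, λ₋. -/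
theorem two_qubit_transition_eigenvalues (ε1 ε2 : ℝ) (h1 : 0 ≤ ε1) (h2 : 0 ≤ ε2) :
    0 ≤ 9 * ε1 ^ 2 - 14 * ε1 * ε2 + 9 * ε2 ^ 2 ∧
      (∀ lam : ℝ,
        (Mtwo ε1 ε2 - lam • (1 : Matrix (Fin 3) (Fin 3) ℝ)).det =
          (1 - lam) * (lamP ε1 ε2 - lam) * (lamM ε1 ε2 - lam)) ∧
      (∀ t : ℝ,
        (Mtwo ε1 ε2 - t • (1 : Matrix (Fin 3) (Fin 3) ℝ)).det = 0 ↔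
          t = 1 ∨ t = lamP ε1 ε2 ∨ t = lamM ε1 ε2) := by

  have hD : 0 ≤ 9 * ε1 ^ 2 - 14 * ε1 * ε2 + 9 * ε2 ^ 2 := by nlinarith [sq_nonneg (ε1 - ε2), sq_nonneg (ε1 + ε2)]
  have hs : Real.sqrt (9 * ε1 ^ 2 - 14 * ε1 * ε2 + 9 * ε2 ^ 2) ^ 2
      = 9 * ε1 ^ 2 - 14 * ε1 * ε2 + 9 * ε2 ^ 2 := Real.sq_sqrt hD
  have hdet : ∀ lam : ℝ,
      (Mtwo ε1 ε2 - lam • (1 : Matrix (Fin 3) (Fin 3) ℝ)).det =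
        (1 - lam) * (lamP ε1 ε2 - lam) * (lamM ε1 ε2 - lam) := by
    intro lam
    simp [Mtwo, lamP, lamM, Matrix.det_fin_three, Matrix.smul_apply, Matrix.one_apply,
      Matrix.sub_apply]
    linear_combination (1 - lam) / 64 * hs
  refine ⟨hD, hdet, fun t => ?_⟩
  rw [hdet t]
  constructor
  · intro h
    rcases mul_eq_zero.1 h with h | h
    · rcases mul_eq_zero.1 h with h | h
      · exact Or.inl (by linarith [sub_eq_zero.1 h])
      · exact Or.inr (Or.inl (sub_eq_zero.1 h).symm)
    · exact Or.inr (Or.inr (sub_eq_zero.1 h).symm)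
  · rintro (rfl | rfl | rfl) <;> ring
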